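/- arXiv:1112.2760 — 6 statements merged into one kernel-verified Lean document; each statement's English description precedes it below -/
import Mathlib

section
/- Let $0<\alpha<1/2$ and $0<\gamma<1-2\alpha$. Then there exists a constant $K>0$ (depending only on $\alpha$ and $\gamma$) such that for every integer $N \geq 1$ and every real $x \geq 0$, $\sum_{k=N+1}^{\infty} \frac{\Gamma(k\gamma)}{\Gamma(k(1-2\alpha))} x^{k-1} \leq K \, \frac{x^{N} \, e^{2 x^{1/(1-2\alpha-\gamma)}}}{\Gamma((1-2\alpha-\gamma)N)}$. In particular the series on the left-hand side converges for every $x \geq 0$. -/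
/-!
Put `δ = 1 - 2α - γ` and `n = N + 1 + k`. Since `Γ(a)Γ(b)/Γ(a+b) = B(a,b)` is antitone in both
arguments, `Γ(nγ)Γ(nδ) ≤ B(γ,δ) Γ(n(1-2α))` and `Γ(δN)Γ(δ(k+1)) ≤ B(δ,δ) Γ(nδ)`, so the `k`-th
term is at most `B(γ,δ) B(δ,δ) x^N x^k / (Γ(δN) Γ(δ(k+1)))`. Bounding the Gamma integral from
below on `(w, ∞)` with `w = (4/3) x^(1/δ)` gives `x^k ≤ 3 ((3/4)^δ)^k e^(2 x^(1/δ)) Γ(δ(k+1))`,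
and the remaining geometric series converges.
-/

open Real Set MeasureTheory ProbabilityTheory

lemma ofReal_beta_integrand {a b t : ℝ} (ht : t ∈ Icc (0 : ℝ) 1) :
    (t : ℂ) ^ ((a : ℂ) - 1) * (1 - (t : ℂ)) ^ ((b : ℂ) - 1)
      = ((t ^ (a - 1) * (1 - t) ^ (b - 1) : ℝ) : ℂ) := by
  push_cast [Complex.ofReal_cpow ht.1, Complex.ofReal_cpow (sub_nonneg.2 ht.2)]
  rfl

lemma integrableOn_beta_integrand {a b : ℝ} (ha : 0 < a) (hb : 0 < b) :
    IntegrableOn (fun t : ℝ => t ^ (a - 1) * (1 - t) ^ (b - 1)) (Ioo 0 1) := by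
  have h : IntegrableOn (fun t : ℝ => ‖(t : ℂ) ^ ((a : ℂ) - 1) * (1 - (t : ℂ)) ^ ((b : ℂ) - 1)‖)
      (Ioo 0 1) :=
    ((Complex.betaIntegral_convergent (by simpa) (by simpa)).1.mono_set Ioo_subset_Ioc_self).norm
  refine h.congr_fun (fun t ht => ?_) measurableSet_Ioo
  dsimp only
  rw [ofReal_beta_integrand (Ioo_subset_Icc_self ht), Complex.norm_real, Real.norm_of_nonneg]
  exact mul_nonneg (rpow_nonneg ht.1.le _) (rpow_nonneg (sub_nonneg.2 ht.2.le) _)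

lemma beta_eq_integral {a b : ℝ} (ha : 0 < a) (hb : 0 < b) :
    beta a b = ∫ t in Ioo 0 1, t ^ (a - 1) * (1 - t) ^ (b - 1) := by
  rw [beta_eq_betaIntegralReal a b ha hb, Complex.betaIntegral,
    intervalIntegral.integral_of_le zero_le_one, integral_Ioc_eq_integral_Ioo,
    setIntegral_congr_fun measurableSet_Ioo fun t ht =>
      ofReal_beta_integrand (Ioo_subset_Icc_self ht),
    integral_complex_ofReal, Complex.ofReal_re]

lemma beta_le_beta {a b a' b' : ℝ} (ha : 0 < a) (hb : 0 < b) (haa' : a ≤ a') (hbb' : b ≤ b') :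
    beta a' b' ≤ beta a b := by
  rw [beta_eq_integral ha hb, beta_eq_integral (ha.trans_le haa') (hb.trans_le hbb')]
  refine setIntegral_mono_on (integrableOn_beta_integrand (ha.trans_le haa') (hb.trans_le hbb'))
    (integrableOn_beta_integrand ha hb) measurableSet_Ioo fun t ⟨ht0, ht1⟩ => ?_
  have h1t : 0 < 1 - t := sub_pos.2 ht1
  exact mul_le_mul (rpow_le_rpow_of_exponent_ge ht0 ht1.le (by linarith))
    (rpow_le_rpow_of_exponent_ge h1t (by linarith) (by linarith)) (rpow_nonneg h1t.le _)
    (rpow_nonneg ht0.le _)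

lemma exp_neg_half_div_two_le_rpow {p t : ℝ} (hp0 : 0 ≤ p) (hp1 : p ≤ 1) (ht : 0 < t) :
    exp (-(t / 2)) / 2 ≤ t ^ (p - 1) := by
  have h1 : exp (-(t / 2)) / 2 ≤ 1 / (1 + t) := by
    have hinv : exp (-(t / 2)) * exp (t / 2) = 1 := by rw [← exp_add]; simp
    rw [div_le_div_iff₀ two_pos (by linarith)]
    nlinarith [add_one_le_exp (t / 2), exp_pos (-(t / 2))]
  refine h1.trans ?_
  rcases le_total t 1 with ht1 | ht1
  · exact (div_le_one (by linarith)).2 (by linarith) |>.trans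
      (one_le_rpow_of_pos_of_le_one_of_nonpos ht ht1 (by linarith))
  · calc 1 / (1 + t) ≤ t ^ (-1 : ℝ) := by
          rw [rpow_neg_one, one_div]; exact inv_anti₀ ht (by linarith)
      _ ≤ t ^ (p - 1) := rpow_le_rpow_of_exponent_le ht1 (by linarith)

/- On `(w, ∞)` the Gamma integrand satisfies `t^(p+q-1) ≥ w^q t^(p-1) ≥ w^q e^(-t/2) / 2`. -/
lemma rpow_le_exp_mul_Gamma {p q w : ℝ} (hp0 : 0 < p) (hp1 : p ≤ 1) (hq : 0 ≤ q) (hw : 0 ≤ w) :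
    w ^ q ≤ 3 * exp (3 / 2 * w) * Gamma (p + q) := by
  have hpq : 0 < p + q := by linarith
  have hGamma : IntegrableOn (fun t => exp (-t) * t ^ (p + q - 1)) (Ioi 0) :=
    GammaIntegral_convergent hpq
  have key : w ^ q * exp (-(3 / 2) * w) / 3 ≤ Gamma (p + q) :=
    calc w ^ q * exp (-(3 / 2) * w) / 3 = ∫ t in Ioi w, w ^ q / 2 * exp (-(3 / 2) * t) := by
          rw [integral_const_mul, integral_exp_mul_Ioi (by norm_num)]; ring
      _ ≤ ∫ t in Ioi w, exp (-t) * t ^ (p + q - 1) := by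
          refine setIntegral_mono_on ((integrableOn_exp_mul_Ioi (by norm_num) w).const_mul _)
            (hGamma.mono_set (Ioi_subset_Ioi hw)) measurableSet_Ioi fun t (ht : w < t) => ?_
          have ht0 : 0 < t := hw.trans_lt ht
          have hsplit : t ^ (p + q - 1) = t ^ q * t ^ (p - 1) := by
            rw [← rpow_add ht0]; ring_nf
          have hexp : exp (-(3 / 2) * t) = exp (-t) * exp (-(t / 2)) := by
            rw [← exp_add]; ring_nf
          rw [hsplit, hexp]
          have hwt := rpow_le_rpow hw ht.le hq
          have hpow := exp_neg_half_div_two_le_rpow hp0.le hp1 ht0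
          calc w ^ q / 2 * (exp (-t) * exp (-(t / 2)))
              = exp (-t) * (w ^ q * (exp (-(t / 2)) / 2)) := by ring
            _ ≤ exp (-t) * (t ^ q * t ^ (p - 1)) := by gcongr
      _ ≤ ∫ t in Ioi 0, exp (-t) * t ^ (p + q - 1) := by
          refine setIntegral_mono_set hGamma ?_ (Ioi_subset_Ioi hw).eventuallyLE
          filter_upwards [ae_restrict_mem measurableSet_Ioi] with t (ht : 0 < t)
          exact mul_nonneg (exp_pos _).le (rpow_nonneg ht.le _)
      _ = Gamma (p + q) := (Gamma_eq_integral hpq).symm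
  calc w ^ q = 3 * exp (3 / 2 * w) * (w ^ q * exp (-(3 / 2) * w) / 3) := by
        rw [neg_mul, exp_neg]; field_simp
    _ ≤ 3 * exp (3 / 2 * w) * Gamma (p + q) := by gcongr

lemma pow_le_geometric_mul_exp_mul_Gamma {δ x : ℝ} (hδ0 : 0 < δ) (hδ1 : δ ≤ 1) (hx : 0 ≤ x)
    (k : ℕ) : x ^ k ≤ 3 * ((3 / 4 : ℝ) ^ δ) ^ k * exp (2 * x ^ (1 / δ)) * Gamma (δ * (k + 1)) := by
  have h := rpow_le_exp_mul_Gamma hδ0 hδ1 (by positivity : 0 ≤ δ * k)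
    (by positivity : 0 ≤ 4 / 3 * x ^ (1 / δ))
  have hscale : (4 / 3 * x ^ (1 / δ)) ^ (δ * k) = ((4 / 3 : ℝ) ^ δ) ^ k * x ^ k := by
    rw [mul_rpow (by norm_num) (by positivity), ← rpow_mul hx, rpow_mul (by norm_num),
      show 1 / δ * (δ * k) = k by field_simp, rpow_natCast, rpow_natCast]
  have hinv : ((3 / 4 : ℝ) ^ δ) ^ k * ((4 / 3 : ℝ) ^ δ) ^ k = 1 := by
    rw [← mul_pow, ← mul_rpow (by norm_num) (by norm_num)]; norm_num
  rw [hscale, show 3 / 2 * (4 / 3 * x ^ (1 / δ)) = 2 * x ^ (1 / δ) by ring,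
    show δ + δ * k = δ * (k + 1) by ring] at h
  calc x ^ k = ((3 / 4 : ℝ) ^ δ) ^ k * (((4 / 3 : ℝ) ^ δ) ^ k * x ^ k) := by
        rw [← mul_assoc, hinv, one_mul]
    _ ≤ ((3 / 4 : ℝ) ^ δ) ^ k * (3 * exp (2 * x ^ (1 / δ)) * Gamma (δ * (k + 1))) := by gcongr
    _ = _ := by ring

lemma Gamma_mul_Gamma_le_beta_mul_Gamma_add {a b a' b' : ℝ} (ha : 0 < a) (hb : 0 < b)
    (haa' : a ≤ a') (hbb' : b ≤ b') : Gamma a' * Gamma b' ≤ beta a b * Gamma (a' + b') := by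
  have h := beta_le_beta ha hb haa' hbb'
  rwa [beta, div_le_iff₀ (Gamma_pos_of_pos (by linarith))] at h

lemma Gamma_mul_Gamma_div_Gamma_le {γ δ m l : ℝ} (hγ : 0 < γ) (hδ : 0 < δ) (hm : 1 ≤ m)
    (hl : 1 ≤ l) :
    Gamma ((m + l) * γ) * Gamma (δ * l) / Gamma ((m + l) * (γ + δ)) ≤
      beta γ δ * beta δ δ / Gamma (δ * m) := by
  have hml : 1 ≤ m + l := by linarith
  have hsplit_γδ : Gamma ((m + l) * γ) * Gamma ((m + l) * δ) ≤
      beta γ δ * Gamma ((m + l) * (γ + δ)) := by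
    rw [mul_add]
    exact Gamma_mul_Gamma_le_beta_mul_Gamma_add hγ hδ (le_mul_of_one_le_left hγ.le hml)
      (le_mul_of_one_le_left hδ.le hml)
  have hsplit_ml : Gamma (δ * m) * Gamma (δ * l) ≤ beta δ δ * Gamma ((m + l) * δ) := by
    rw [add_mul, mul_comm m, mul_comm l]
    exact Gamma_mul_Gamma_le_beta_mul_Gamma_add hδ hδ (le_mul_of_one_le_right hδ.le hm)
      (le_mul_of_one_le_right hδ.le hl)
  rw [div_le_div_iff₀ (Gamma_pos_of_pos (by positivity)) (Gamma_pos_of_pos (by positivity))]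
  have := Gamma_pos_of_pos (by positivity : 0 < (m + l) * γ)
  calc Gamma ((m + l) * γ) * Gamma (δ * l) * Gamma (δ * m)
      = Gamma ((m + l) * γ) * (Gamma (δ * m) * Gamma (δ * l)) := by ring
    _ ≤ Gamma ((m + l) * γ) * (beta δ δ * Gamma ((m + l) * δ)) := by gcongr
    _ = beta δ δ * (Gamma ((m + l) * γ) * Gamma ((m + l) * δ)) := by ring
    _ ≤ beta δ δ * (beta γ δ * Gamma ((m + l) * (γ + δ))) := by
        gcongr; exact (beta_pos hδ hδ).le
    _ = beta γ δ * beta δ δ * Gamma ((m + l) * (γ + δ)) := by ring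

lemma Gamma_div_Gamma_mul_pow_le {γ δ x : ℝ} (hγ : 0 < γ) (hδ0 : 0 < δ) (hδ1 : δ ≤ 1) {N : ℕ}
    (hN : 1 ≤ N) (hx : 0 ≤ x) (k : ℕ) :
    Gamma ((N + 1 + k : ℕ) * γ) / Gamma ((N + 1 + k : ℕ) * (γ + δ)) * x ^ (N + k) ≤
      3 * beta γ δ * beta δ δ * (x ^ N * exp (2 * x ^ (1 / δ)) / Gamma (δ * N)) *
        ((3 / 4 : ℝ) ^ δ) ^ k := by
  have hcast : ((N + 1 + k : ℕ) : ℝ) = N + (k + 1) := by push_cast; ring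
  have hratio := Gamma_mul_Gamma_div_Gamma_le (m := N) (l := k + 1) hγ hδ0 (by exact_mod_cast hN)
    (by linarith [k.cast_nonneg (α := ℝ)])
  rw [hcast]
  calc Gamma ((N + (k + 1)) * γ) / Gamma ((N + (k + 1)) * (γ + δ)) * x ^ (N + k)
      = Gamma ((N + (k + 1)) * γ) / Gamma ((N + (k + 1)) * (γ + δ)) * x ^ N * x ^ k := by
        rw [pow_add, mul_assoc]
    _ ≤ Gamma ((N + (k + 1)) * γ) / Gamma ((N + (k + 1)) * (γ + δ)) * x ^ N *
          (3 * ((3 / 4 : ℝ) ^ δ) ^ k * exp (2 * x ^ (1 / δ)) * Gamma (δ * (k + 1))) := by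
        have := Gamma_nonneg_of_nonneg (s := (N + (k + 1)) * γ) (by positivity)
        have := Gamma_nonneg_of_nonneg (s := (N + (k + 1)) * (γ + δ)) (by positivity)
        gcongr; exact pow_le_geometric_mul_exp_mul_Gamma hδ0 hδ1 hx k
    _ = 3 * ((3 / 4 : ℝ) ^ δ) ^ k * exp (2 * x ^ (1 / δ)) * x ^ N *
          (Gamma ((N + (k + 1)) * γ) * Gamma (δ * (k + 1)) /
            Gamma ((N + (k + 1)) * (γ + δ))) := by
        ring
    _ ≤ 3 * ((3 / 4 : ℝ) ^ δ) ^ k * exp (2 * x ^ (1 / δ)) * x ^ N *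
          (beta γ δ * beta δ δ / Gamma (δ * N)) := by gcongr
    _ = _ := by ring

lemma summable_and_tsum_le_of_le_geometric {f : ℕ → ℝ} {c r : ℝ} (hf0 : ∀ k, 0 ≤ f k)
    (hr0 : 0 ≤ r) (hr1 : r < 1) (hf : ∀ k, f k ≤ c * r ^ k) :
    Summable f ∧ ∑' k, f k ≤ c / (1 - r) := by
  have hgeom : Summable (fun k => c * r ^ k) :=
    (summable_geometric_of_lt_one hr0 hr1).mul_left c
  have hsum : Summable f := .of_nonneg_of_le hf0 hf hgeom
  refine ⟨hsum, ?_⟩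
  calc ∑' k, f k ≤ ∑' k, c * r ^ k := hsum.tsum_le_tsum hf hgeom
    _ = c / (1 - r) := by rw [tsum_mul_left, tsum_geometric_of_lt_one hr0 hr1, div_eq_mul_inv]

theorem stmt_0_general (α γ : ℝ) (hα : 0 < α) (hγ : 0 < γ) (hγ' : γ < 1 - 2*α) :
    ∃ K : ℝ, 0 < K ∧ ∀ N : ℕ, 1 ≤ N → ∀ x : ℝ, 0 ≤ x →
      Summable (fun k : ℕ =>
        Gamma ((N+1+k : ℕ) * γ) / Gamma ((N+1+k : ℕ) * (1 - 2*α)) * x ^ (N+k)) ∧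
      ∑' k : ℕ, Gamma ((N+1+k : ℕ) * γ) / Gamma ((N+1+k : ℕ) * (1 - 2*α)) * x ^ (N+k)
        ≤ K * (x ^ N * exp (2 * x ^ ((1:ℝ)/(1 - 2*α - γ))) / Gamma ((1 - 2*α - γ) * N)) := by
  set δ := 1 - 2 * α - γ with hδ
  have hδ0 : 0 < δ := by linarith
  have hδ1 : δ ≤ 1 := by linarith
  rw [show 1 - 2 * α = γ + δ by rw [hδ]; ring]
  have hρ0 : 0 ≤ (3 / 4 : ℝ) ^ δ := by positivity
  have hρ1 : (3 / 4 : ℝ) ^ δ < 1 := rpow_lt_one (by norm_num) (by norm_num) hδ0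
  refine ⟨3 * beta γ δ * beta δ δ / (1 - (3 / 4 : ℝ) ^ δ), ?_, fun N hN x hx => ?_⟩
  · have := beta_pos hγ hδ0
    have := beta_pos hδ0 hδ0
    have : 0 < 1 - (3 / 4 : ℝ) ^ δ := by linarith
    positivity
  have hterm0 : ∀ k : ℕ, 0 ≤ Gamma ((N + 1 + k : ℕ) * γ) / Gamma ((N + 1 + k : ℕ) * (γ + δ)) *
      x ^ (N + k) := fun k => by
    have := Gamma_nonneg_of_nonneg (s := (N + 1 + k : ℕ) * γ) (by positivity)
    have := Gamma_nonneg_of_nonneg (s := (N + 1 + k : ℕ) * (γ + δ)) (by positivity)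
    positivity
  obtain ⟨hsum, hle⟩ := summable_and_tsum_le_of_le_geometric hterm0 hρ0 hρ1
    (Gamma_div_Gamma_mul_pow_le hγ hδ0 hδ1 hN hx)
  exact ⟨hsum, hle.trans_eq (by ring)⟩

/-- Tail estimate for the Mittag-Leffler-type series `∑_{k≥N+1} Γ(kγ)/Γ(k(1-2α)) x^{k-1}`. -/
theorem stmt_0 (α γ : ℝ) (hα : 0 < α) (hα' : α < 1/2) (hγ : 0 < γ) (hγ' : γ < 1 - 2*α) :
    ∃ K : ℝ, 0 < K ∧ ∀ N : ℕ, 1 ≤ N → ∀ x : ℝ, 0 ≤ x →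
      Summable (fun k : ℕ =>
        Gamma ((N+1+k : ℕ) * γ) / Gamma ((N+1+k : ℕ) * (1 - 2*α)) * x ^ (N+k)) ∧
      ∑' k : ℕ, Gamma ((N+1+k : ℕ) * γ) / Gamma ((N+1+k : ℕ) * (1 - 2*α)) * x ^ (N+k)
        ≤ K * (x ^ N * exp (2 * x ^ ((1:ℝ)/(1 - 2*α - γ))) / Gamma ((1 - 2*α - γ) * N)) :=
  stmt_0_general α γ hα hγ hγ'
end

section
/- Let $0<a<1$. Then for every real $x \geq 0$, $\sum_{k=0}^{\infty} \frac{x^{k}}{\Gamma((1+k)a)} \leq \frac{4e^{2}}{a} \, e^{2 x^{1/a}}$. -/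
/-!
Put `y = x ^ (1 / a)` and `n = ⌊s⌋` for `s = (1 + k) a`. Since `Γ ≥ 1 / 2` on `(0, ∞)` and `Γ` is
increasing on `[2, ∞)`, we have `(n + 1)! ≤ 2 ^ (n + 2) Γ(s)`; together with
`x ^ k = y ^ (a k) ≤ (1 + y) ^ (n + 1)` this bounds the `k`-th term by `2 z ^ (n + 1) / (n + 1)!`
with `z = 2 (1 + y)`. Along each residue class modulo `K = ⌈1 / a⌉ ≤ 2 / a` the index `n` strictly
increases, so each class contributes at most `2 e ^ z = 2 e² e ^ (2 y)`.
-/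

open Real

open Nat in
lemma Real.hasSum_pow_div_factorial (x : ℝ) : HasSum (fun n ↦ x ^ n / n !) (exp x) :=
  exp_eq_exp_ℝ ▸ NormedSpace.expSeries_div_hasSum_exp x

lemma Real.one_half_le_Gamma {s : ℝ} (hs : 0 < s) : 1 / 2 ≤ Gamma s := by
  obtain ⟨x₀, ⟨hx₁, hx₂⟩, hmin⟩ := exists_isMinOn_Gamma_Ioi
  have hx₀ : 0 < x₀ := by linarith
  have hΓ₂ : 1 ≤ Gamma (x₀ + 1) := by
    simpa only [Gamma_two] using Gamma_strictMonoOn_Ici.monotoneOn (a := 2) (b := x₀ + 1)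
      Set.self_mem_Ici (Set.mem_Ici.2 (by linarith)) (by linarith)
  calc 1 / 2 ≤ Gamma (x₀ + 1) / x₀ := by
        rw [div_le_div_iff₀ two_pos hx₀]; linarith
    _ = Gamma x₀ := by rw [Gamma_add_one hx₀.ne', mul_div_cancel_left₀ _ hx₀.ne']
    _ ≤ Gamma s := hmin (Set.mem_Ioi.2 hs)

lemma Nat.mul_succ_le_two_pow_succ (n : ℕ) : n * (n + 1) ≤ 2 ^ (n + 1) := by
  induction n with
  | zero => simp
  | succ n ih =>
    rcases Nat.lt_or_ge n 2 with hn | hn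
    · interval_cases n <;> norm_num
    · rw [pow_succ]; nlinarith

open Nat in
lemma Real.factorial_succ_le_two_pow_mul_Gamma {s : ℝ} {n : ℕ} (hs : 0 < s) (hn : (n : ℝ) ≤ s) :
    ((n + 1)! : ℝ) ≤ 2 ^ (n + 2) * Gamma s := by
  match n, hn with
  | 0, _ | 1, _ =>
    have := one_half_le_Gamma hs
    norm_num [Nat.factorial]; linarith
  | m + 2, hn =>
    have hΓ : ((m + 1)! : ℝ) ≤ Gamma s := by
      rw [← Gamma_nat_eq_factorial]
      push_cast at hn ⊢
      exact Gamma_strictMonoOn_Ici.monotoneOn (Set.mem_Ici.2 (by linarith))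
        (Set.mem_Ici.2 (by linarith)) (by linarith)
    have hfac : (m + 3)! ≤ 2 ^ (m + 3) * (m + 1)! := by
      rw [factorial_succ, factorial_succ, ← mul_assoc]
      exact Nat.mul_le_mul_right _ (by simpa [mul_comm] using mul_succ_le_two_pow_succ (m + 2))
    calc ((m + 2 + 1)! : ℝ) ≤ 2 ^ (m + 3) * (m + 1)! := by exact_mod_cast hfac
      _ ≤ 2 ^ (m + 2 + 2) * Gamma s :=
        mul_le_mul (pow_le_pow_right₀ one_le_two (by omega)) hΓ (by positivity) (by positivity)

lemma pow_le_one_add_rpow_one_div_pow {x a : ℝ} (hx : 0 ≤ x) (ha : 0 < a) {k m : ℕ}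
    (hkm : a * k ≤ m) : x ^ k ≤ (1 + x ^ (1 / a)) ^ m := by
  have hy : 0 ≤ x ^ (1 / a) := rpow_nonneg hx _
  calc x ^ k = (x ^ (1 / a)) ^ (a * k) := by
        rw [← rpow_mul hx, ← mul_assoc, one_div_mul_cancel ha.ne', one_mul, rpow_natCast]
    _ ≤ (1 + x ^ (1 / a)) ^ (a * k) := by gcongr; linarith
    _ ≤ (1 + x ^ (1 / a)) ^ (m : ℝ) := rpow_le_rpow_of_exponent_le (by linarith) hkm
    _ = (1 + x ^ (1 / a)) ^ m := rpow_natCast _ _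

section ResidueClasses

variable {f : ℕ → ℝ} {g : ℕ → ℕ} {K : ℕ}

lemma strictMono_comp_add_mul_of_lt_comp_add (hg : ∀ k, g k < g (k + K)) (r : ℕ) :
    StrictMono fun j ↦ g (r + K * j) :=
  strictMono_nat_of_lt_succ fun j ↦ by simpa only [mul_add, mul_one, add_assoc] using hg (r + K * j)

lemma neZero_of_lt_comp_add (hg : ∀ k, g k < g (k + K)) : NeZero K :=
  ⟨by rintro rfl; exact lt_irrefl _ (hg 0)⟩

lemma summable_comp_of_lt_comp_add (hf₀ : ∀ m, 0 ≤ f m) (hf : Summable f)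
    (hg : ∀ k, g k < g (k + K)) : Summable fun k ↦ f (g k) := by
  have := neZero_of_lt_comp_add hg
  rw [← (Nat.residueClassesEquiv K).symm.summable_iff]
  refine (summable_prod_of_nonneg fun _ ↦ hf₀ _).2 ⟨fun r ↦ ?_, .of_finite⟩
  exact hf.comp_injective (strictMono_comp_add_mul_of_lt_comp_add hg r.val).injective

lemma tsum_comp_le_mul_tsum_of_lt_comp_add (hf₀ : ∀ m, 0 ≤ f m) (hf : Summable f)
    (hg : ∀ k, g k < g (k + K)) : ∑' k, f (g k) ≤ K * ∑' m, f m := by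
  have := neZero_of_lt_comp_add hg
  rw [Nat.sumByResidueClasses (summable_comp_of_lt_comp_add hf₀ hf hg) K]
  calc ∑ r : ZMod K, ∑' j, f (g (r.val + K * j)) ≤ ∑ _r : ZMod K, ∑' m, f m :=
        Finset.sum_le_sum fun r _ ↦ tsum_comp_le_tsum_of_inj hf hf₀
          (strictMono_comp_add_mul_of_lt_comp_add hg _).injective
    _ = K * ∑' m, f m := by simp

lemma summable_and_tsum_le_mul_of_le_comp {t : ℕ → ℝ} {S : ℝ} (ht₀ : ∀ k, 0 ≤ t k)
    (hf₀ : ∀ m, 0 ≤ f m) (hf : HasSum f S) (hg : ∀ k, g k < g (k + K)) (ht : ∀ k, t k ≤ f (g k)) :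
    Summable t ∧ ∑' k, t k ≤ K * S := by
  have hfg := summable_comp_of_lt_comp_add hf₀ hf.summable hg
  have ht_summable := hfg.of_nonneg_of_le ht₀ ht
  refine ⟨ht_summable, ?_⟩
  calc ∑' k, t k ≤ ∑' k, f (g k) := ht_summable.tsum_le_tsum ht hfg
    _ ≤ K * S := hf.tsum_eq ▸ tsum_comp_le_mul_tsum_of_lt_comp_add hf₀ hf.summable hg

end ResidueClasses

section Floor

variable {R : Type*} [Field R] [LinearOrder R] [IsStrictOrderedRing R] [FloorSemiring R]

lemma Nat.floor_lt_floor_add {u v : R} (hu : 0 ≤ u) (hv : 1 ≤ v) : ⌊u⌋₊ < ⌊u + v⌋₊ :=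
  Nat.lt_of_succ_le <| (Nat.floor_add_one hu).symm.trans_le (Nat.floor_le_floor (by gcongr))

lemma Nat.one_le_ceil_one_div_mul {a : R} (ha : 0 < a) : 1 ≤ ⌈1 / a⌉₊ * a := by
  simpa only [div_le_iff₀ ha] using Nat.le_ceil (1 / a)

lemma Nat.ceil_one_div_le_two_div {a : R} (ha : 0 < a) (ha₁ : a ≤ 1) : (⌈1 / a⌉₊ : R) ≤ 2 / a := by
  have h : 1 ≤ 1 / a := by rwa [le_div_iff₀ ha, one_mul]
  calc (⌈1 / a⌉₊ : R) ≤ 1 / a + 1 := (Nat.ceil_lt_add_one (one_div_pos.2 ha).le).le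
    _ ≤ 2 / a := by rw [show 2 / a = 1 / a + 1 / a by ring]; gcongr

end Floor

open Nat in
lemma pow_div_Gamma_le {x a s : ℝ} (hx : 0 ≤ x) (ha : 0 < a) (hs : 0 < s) {k : ℕ}
    (hks : a * k ≤ s) :
    x ^ k / Gamma s ≤ 2 * ((2 * (1 + x ^ (1 / a))) ^ (⌊s⌋₊ + 1) / (⌊s⌋₊ + 1)!) := by
  have hpow : x ^ k ≤ (1 + x ^ (1 / a)) ^ (⌊s⌋₊ + 1) :=
    pow_le_one_add_rpow_one_div_pow hx ha (by push_cast; linarith [Nat.lt_floor_add_one s])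
  have hfac := factorial_succ_le_two_pow_mul_Gamma hs (Nat.floor_le hs.le)
  have hZ : 0 ≤ 1 + x ^ (1 / a) := by positivity
  have hΓ := Gamma_pos_of_pos hs
  generalize ⌊s⌋₊ = n at hpow hfac ⊢
  generalize 1 + x ^ (1 / a) = Z at hpow hZ ⊢
  calc x ^ k / Gamma s ≤ Z ^ (n + 1) / Gamma s := by gcongr
    _ ≤ Z ^ (n + 1) * 2 ^ (n + 2) / (n + 1)! := by
      rw [div_le_div_iff₀ hΓ (by positivity), mul_assoc]
      gcongr
    _ = 2 * ((2 * Z) ^ (n + 1) / (n + 1)!) := by ring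

/-- Mittag-Leffler-type bound: `∑_{k≥0} x^k / Γ((1+k)a) ≤ (4e²/a) e^{2 x^{1/a}}`. -/
theorem stmt_2 (a : ℝ) (ha : 0 < a) (ha' : a < 1) :
    ∀ x : ℝ, 0 ≤ x →
      Summable (fun k : ℕ => x ^ k / Gamma ((1 + k : ℕ) * a)) ∧
      ∑' k : ℕ, x ^ k / Gamma ((1 + k : ℕ) * a)
        ≤ 4 * exp 2 / a * exp (2 * x ^ ((1:ℝ)/a)) := by
  intro x hx
  set Z := 1 + x ^ (1 / a)
  set g : ℕ → ℕ := fun k ↦ ⌊((1 + k : ℕ) : ℝ) * a⌋₊ + 1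
  set K := ⌈1 / a⌉₊
  have hs : ∀ k : ℕ, 0 < ((1 + k : ℕ) : ℝ) * a := fun k ↦ by positivity
  have hg : ∀ k, g k < g (k + K) := fun k ↦ by
    have hsplit : ((1 + (k + K) : ℕ) : ℝ) * a = ((1 + k : ℕ) : ℝ) * a + K * a := by
      push_cast; ring
    simpa only [g, add_lt_add_iff_right, hsplit] using
      Nat.floor_lt_floor_add (hs k).le (Nat.one_le_ceil_one_div_mul ha)
  obtain ⟨hsummable, hle⟩ := summable_and_tsum_le_mul_of_le_comp
    (fun k ↦ div_nonneg (pow_nonneg hx k) (Gamma_pos_of_pos (hs k)).le)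
    (fun m ↦ by positivity) ((hasSum_pow_div_factorial (2 * Z)).mul_left 2) hg
    (fun k ↦ pow_div_Gamma_le hx ha (hs k) (by push_cast; nlinarith))
  refine ⟨hsummable, hle.trans ?_⟩
  calc K * (2 * exp (2 * Z)) ≤ 2 / a * (2 * exp (2 * Z)) := by
        gcongr; exact Nat.ceil_one_div_le_two_div ha ha'.le
    _ = 4 * exp 2 / a * exp (2 * x ^ (1 / a)) := by
      rw [mul_add, mul_one, exp_add]; ring
end

section
/- Let $0<\alpha<1/2$, $T>0$, and $A \geq 0$, $D \geq 0$. Let $(\varphi_k)_{k\geq 1}$ be a sequence of nonnegative measurable functions on $[0,T]$ such that $\varphi_1(t) \leq D$ for all $t\in[0,T]$, and such that for every $k\geq 1$ and every $t\in[0,T]$, $\varphi_{k+1}(t) \leq A \int_0^t \left((t-r)^{-2\alpha} + r^{-\alpha}\right) \varphi_k(r)\,dr$. Then for every $n\geq 1$ and every $t\in[0,T]$, $\varphi_n(t) \leq D \, \frac{\Gamma(1-2\alpha)}{\Gamma(n(1-2\alpha))} \left( A\,(1+T^{\alpha})\,\Gamma(1-2\alpha)\,T^{1-2\alpha} \right)^{n-1}$.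 -/
/-!
With `β = 1 - 2α`, one proves by induction the sharper bound
`φ (m+1) t ≤ D Γ(β)/Γ((m+1)β) (A (1 + T^α) Γ(β))^m t^(mβ)`, and then uses `t ≤ T`.
Against `r^s` the singular part `(t-r)^(β-1)` of the kernel integrates to `t^(s+β) B(s+1, β)`
and the regular part `r^(-α)` to `t^(s+β+α)/(s+β+α) ≤ T^α t^(s+β) B(s+β+α, 1)`. The Beta
function is antitone in each argument, so both are at most `B(s+β, β) = Γ(s+β)Γ(β)/Γ(s+2β)`,
and with `s = mβ` the Gamma factors telescope.
-/

open Real MeasureTheory Set intervalIntegral ProbabilityTheory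

lemma ofReal_rpow_mul_one_sub_rpow {u x y : ℝ} (hu : u ∈ Icc (0:ℝ) 1) :
    (u : ℂ) ^ ((x : ℂ) - 1) * (1 - (u : ℂ)) ^ ((y : ℂ) - 1)
      = ((u ^ (x - 1) * (1 - u) ^ (y - 1) : ℝ) : ℂ) := by
  rw [Complex.ofReal_mul, Complex.ofReal_cpow hu.1, Complex.ofReal_cpow (sub_nonneg.2 hu.2)]
  push_cast
  rfl

lemma Complex.betaIntegral_ofReal (x y : ℝ) :
    Complex.betaIntegral x y = ((∫ u in (0:ℝ)..1, u ^ (x - 1) * (1 - u) ^ (y - 1) : ℝ) : ℂ) := by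
  rw [Complex.betaIntegral, ← intervalIntegral.integral_ofReal]
  exact integral_congr fun u hu => ofReal_rpow_mul_one_sub_rpow (uIcc_of_le (zero_le_one (α := ℝ)) ▸ hu)

lemma intervalIntegrable_rpow_mul_one_sub_rpow {x y : ℝ} (hx : 0 < x) (hy : 0 < y) :
    IntervalIntegrable (fun u : ℝ => u ^ (x - 1) * (1 - u) ^ (y - 1)) volume 0 1 := by
  have h := Complex.betaIntegral_convergent (u := x) (v := y) (by simpa using hx)
    (by simpa using hy)
  have h_re : IntervalIntegrable (fun u : ℝ =>
      ((u : ℂ) ^ ((x : ℂ) - 1) * (1 - (u : ℂ)) ^ ((y : ℂ) - 1)).re) volume 0 1 :=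
    (intervalIntegrable_iff.2 (intervalIntegrable_iff.1 h).re)
  refine h_re.congr fun u hu => ?_
  rw [uIoc_of_le zero_le_one] at hu
  rw [ofReal_rpow_mul_one_sub_rpow (Ioc_subset_Icc_self hu), Complex.ofReal_re]

lemma integral_rpow_mul_one_sub_rpow {x y : ℝ} (hx : 0 < x) (hy : 0 < y) :
    ∫ u in (0:ℝ)..1, u ^ (x - 1) * (1 - u) ^ (y - 1) = beta x y := by
  rw [beta_eq_betaIntegralReal x y hx hy, Complex.betaIntegral_ofReal, Complex.ofReal_re]

namespace ProbabilityTheory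

lemma beta_comm (x y : ℝ) : beta x y = beta y x := by
  rw [beta, beta, mul_comm, add_comm]

lemma beta_one_right {x : ℝ} (hx : 0 < x) : beta x 1 = 1 / x := by
  rw [beta, Gamma_one, Gamma_add_one hx.ne']
  field_simp [(Gamma_pos_of_pos hx).ne']

lemma beta_le_beta_of_le_left {x x' y : ℝ} (hx : 0 < x) (hy : 0 < y) (hxx' : x ≤ x') :
    beta x' y ≤ beta x y := by
  rw [← integral_rpow_mul_one_sub_rpow (hx.trans_le hxx') hy,
    ← integral_rpow_mul_one_sub_rpow hx hy]
  refine integral_mono_on_of_le_Ioo zero_le_one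
    (intervalIntegrable_rpow_mul_one_sub_rpow (hx.trans_le hxx') hy)
    (intervalIntegrable_rpow_mul_one_sub_rpow hx hy) fun u hu => ?_
  exact mul_le_mul_of_nonneg_right (rpow_le_rpow_of_exponent_ge hu.1 hu.2.le (by linarith))
    (rpow_nonneg (sub_nonneg.2 hu.2.le) _)

lemma one_div_le_beta {x y : ℝ} (hx : 0 < x) (hy : 0 < y) (hy1 : y ≤ 1) : 1 / x ≤ beta x y := by
  rw [← beta_one_right hx, beta_comm, beta_comm x]
  exact beta_le_beta_of_le_left hy hx hy1

end ProbabilityTheory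

lemma rpow_mul_sub_rpow_eq {x y r t : ℝ} (hr : 0 ≤ r) (hrt : r ≤ t) (ht : 0 < t) :
    r ^ (x - 1) * (t - r) ^ (y - 1)
      = t ^ (x + y - 2) * ((r / t) ^ (x - 1) * (1 - r / t) ^ (y - 1)) := by
  rw [one_sub_div ht.ne', div_rpow hr ht.le, div_rpow (sub_nonneg.2 hrt) ht.le,
    show x + y - 2 = (x - 1) + (y - 1) by ring, rpow_add ht]
  field_simp [(rpow_pos_of_pos ht (x - 1)).ne', (rpow_pos_of_pos ht (y - 1)).ne']

lemma intervalIntegrable_rpow_mul_sub_rpow {x y t : ℝ} (hx : 0 < x) (hy : 0 < y) (ht : 0 < t) :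
    IntervalIntegrable (fun r : ℝ => r ^ (x - 1) * (t - r) ^ (y - 1)) volume 0 t := by
  have h := (intervalIntegrable_rpow_mul_one_sub_rpow hx hy).comp_mul_left (c := t⁻¹)
  rw [zero_div, one_div, inv_inv] at h
  refine ((h.const_mul (t ^ (x + y - 2))).congr fun r hr => ?_)
  rw [uIoc_of_le ht.le] at hr
  rw [rpow_mul_sub_rpow_eq hr.1.le hr.2 ht, inv_mul_eq_div]

lemma integral_rpow_mul_sub_rpow {x y t : ℝ} (hx : 0 < x) (hy : 0 < y) (ht : 0 < t) :
    ∫ r in (0:ℝ)..t, r ^ (x - 1) * (t - r) ^ (y - 1) = t ^ (x + y - 1) * beta x y := by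
  rw [integral_congr fun r hr => rpow_mul_sub_rpow_eq (uIcc_of_le ht.le ▸ hr).1
      (uIcc_of_le ht.le ▸ hr).2 ht, intervalIntegral.integral_const_mul,
    intervalIntegral.integral_comp_div (fun u => u ^ (x - 1) * (1 - u) ^ (y - 1)) ht.ne',
    zero_div, div_self ht.ne', integral_rpow_mul_one_sub_rpow hx hy, smul_eq_mul,
    show x + y - 1 = (x + y - 2) + 1 by ring, rpow_add_one ht.ne']
  ring

lemma intervalIntegral.integral_mono_of_nonneg_on {f g : ℝ → ℝ} {a b : ℝ} (hab : a ≤ b)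
    (hg : IntervalIntegrable g volume a b) (hf : ∀ x ∈ Ioc a b, 0 ≤ f x)
    (hfg : ∀ x ∈ Ioc a b, f x ≤ g x) : ∫ x in a..b, f x ≤ ∫ x in a..b, g x := by
  rw [integral_of_le hab, integral_of_le hab]
  exact integral_mono_of_nonneg (ae_restrict_of_forall_mem measurableSet_Ioc hf) hg.1
    (ae_restrict_of_forall_mem measurableSet_Ioc hfg)

section SingularKernel

variable {α s t T : ℝ}

lemma singularKernel_mul_rpow_eq {r : ℝ} (hr : r ∈ Ioc 0 t) :
    ((t - r) ^ (-(2 * α)) + r ^ (-α)) * r ^ s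
      = r ^ ((s + 1) - 1) * (t - r) ^ ((1 - 2 * α) - 1) + r ^ (s - α) := by
  rw [add_sub_cancel_right, sub_sub_cancel_left, add_mul, ← rpow_add hr.1, neg_add_eq_sub,
    mul_comm]

lemma intervalIntegrable_singularKernel_mul_rpow (hα : 0 < α) (hα' : α < 1 / 2) (hs : 2 * α - 1 < s)
    (ht : 0 ≤ t) :
    IntervalIntegrable (fun r => ((t - r) ^ (-(2 * α)) + r ^ (-α)) * r ^ s) volume 0 t := by
  rcases ht.eq_or_lt with rfl | ht
  · exact IntervalIntegrable.refl
  refine ((intervalIntegrable_rpow_mul_sub_rpow (x := s + 1) (y := 1 - 2 * α) (by linarith)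
    (by linarith) ht).add
    (intervalIntegral.intervalIntegrable_rpow' (r := s - α) (by linarith))).congr fun r hr =>
      (singularKernel_mul_rpow_eq (uIoc_of_le ht.le ▸ hr)).symm

lemma integral_singularKernel_mul_rpow_le (hα : 0 < α) (hα' : α < 1 / 2) (hs : 2 * α - 1 < s)
    (ht : 0 ≤ t) (htT : t ≤ T) :
    ∫ r in (0:ℝ)..t, ((t - r) ^ (-(2 * α)) + r ^ (-α)) * r ^ s
      ≤ (1 + T ^ α) * beta (s + (1 - 2 * α)) (1 - 2 * α) * t ^ (s + (1 - 2 * α)) := by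
  set β := 1 - 2 * α with hβ_def
  have hβ : 0 < β := by linarith
  rcases ht.eq_or_lt with rfl | ht
  · rw [integral_same, zero_rpow (by linarith), mul_zero]
  have h_split : ∫ r in (0:ℝ)..t, ((t - r) ^ (-(2 * α)) + r ^ (-α)) * r ^ s
      = t ^ (s + β) * beta (s + 1) β + t ^ (s + β + α) / (s + β + α) := by
    rw [integral_congr_ae (Filter.Eventually.of_forall fun r hr =>
        singularKernel_mul_rpow_eq (uIoc_of_le ht.le ▸ hr)),
      integral_add (intervalIntegrable_rpow_mul_sub_rpow (by linarith) hβ ht)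
        (intervalIntegral.intervalIntegrable_rpow' (by linarith)),
      integral_rpow_mul_sub_rpow (by linarith) hβ ht, integral_rpow (Or.inl (by linarith)),
      zero_rpow (by linarith), show s - α + 1 = s + β + α by ring,
      show s + 1 + β - 1 = s + β by ring, sub_zero]
  have h_beta : beta (s + 1) β ≤ beta (s + β) β :=
    beta_le_beta_of_le_left (by linarith) hβ (by linarith)
  have h_inv : 1 / (s + β + α) ≤ beta (s + β) β :=
    (one_div_le_beta (by linarith) hβ (by linarith)).trans
      (beta_le_beta_of_le_left (by linarith) hβ (by linarith))
  have h_pow : t ^ (s + β + α) ≤ t ^ (s + β) * T ^ α := by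
    rw [rpow_add ht]
    exact mul_le_mul_of_nonneg_left (rpow_le_rpow ht.le htT hα.le) (rpow_nonneg ht.le _)
  rw [h_split, div_eq_mul_one_div]
  calc t ^ (s + β) * beta (s + 1) β + t ^ (s + β + α) * (1 / (s + β + α))
      ≤ t ^ (s + β) * beta (s + β) β + t ^ (s + β) * T ^ α * beta (s + β) β := by
        have : 0 ≤ s + β + α := by linarith
        have : 0 ≤ t ^ (s + β) := rpow_nonneg ht.le _
        have : 0 ≤ T ^ α := rpow_nonneg (ht.le.trans htT) _
        gcongr
    _ = (1 + T ^ α) * beta (s + β) β * t ^ (s + β) := by ring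

lemma integral_singularKernel_mul_le {g : ℝ → ℝ} {c : ℝ} (hα : 0 < α) (hα' : α < 1 / 2)
    (hs : 2 * α - 1 < s) (ht : 0 ≤ t) (htT : t ≤ T) (hc : 0 ≤ c)
    (hg_nonneg : ∀ r ∈ Ioc 0 t, 0 ≤ g r) (hg_le : ∀ r ∈ Ioc 0 t, g r ≤ c * r ^ s) :
    ∫ r in (0:ℝ)..t, ((t - r) ^ (-(2 * α)) + r ^ (-α)) * g r
      ≤ c * ((1 + T ^ α) * beta (s + (1 - 2 * α)) (1 - 2 * α) * t ^ (s + (1 - 2 * α))) := by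
  have h_kernel : ∀ r ∈ Ioc 0 t, 0 ≤ (t - r) ^ (-(2 * α)) + r ^ (-α) := fun r hr =>
    add_nonneg (rpow_nonneg (sub_nonneg.2 hr.2) _) (rpow_nonneg hr.1.le _)
  calc ∫ r in (0:ℝ)..t, ((t - r) ^ (-(2 * α)) + r ^ (-α)) * g r
      ≤ ∫ r in (0:ℝ)..t, c * (((t - r) ^ (-(2 * α)) + r ^ (-α)) * r ^ s) := by
        refine integral_mono_of_nonneg_on ht
          ((intervalIntegrable_singularKernel_mul_rpow hα hα' hs ht).const_mul c)
          (fun r hr => mul_nonneg (h_kernel r hr) (hg_nonneg r hr)) fun r hr => ?_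
        rw [mul_left_comm]
        exact mul_le_mul_of_nonneg_left (hg_le r hr) (h_kernel r hr)
    _ = c * ∫ r in (0:ℝ)..t, ((t - r) ^ (-(2 * α)) + r ^ (-α)) * r ^ s :=
        intervalIntegral.integral_const_mul _ _
    _ ≤ _ := mul_le_mul_of_nonneg_left (integral_singularKernel_mul_rpow_le hα hα' hs ht htT) hc

end SingularKernel

theorem singularGronwall_iterate_le_rpow {α T A D : ℝ} {φ : ℕ → ℝ → ℝ} (hα : 0 < α)
    (hα' : α < 1 / 2) (hT : 0 ≤ T) (hA : 0 ≤ A) (hD : 0 ≤ D)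
    (hnonneg : ∀ k : ℕ, 1 ≤ k → ∀ t ∈ Icc (0:ℝ) T, 0 ≤ φ k t)
    (h1 : ∀ t ∈ Icc (0:ℝ) T, φ 1 t ≤ D)
    (hrec : ∀ k : ℕ, 1 ≤ k → ∀ t ∈ Icc (0:ℝ) T,
      φ (k + 1) t ≤ A * ∫ r in (0:ℝ)..t, ((t - r) ^ (-(2 * α)) + r ^ (-α)) * φ k r)
    (m : ℕ) : ∀ t ∈ Icc (0:ℝ) T,
      φ (m + 1) t ≤ D * (Gamma (1 - 2 * α) / Gamma ((m + 1) * (1 - 2 * α)))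
        * (A * (1 + T ^ α) * Gamma (1 - 2 * α)) ^ m * t ^ (m * (1 - 2 * α)) := by
  set β := 1 - 2 * α with hβ_def
  have hβ : 0 < β := by linarith
  have hΓβ := Gamma_pos_of_pos hβ
  induction m with
  | zero =>
    intro t ht
    simpa [div_self hΓβ.ne'] using h1 t ht
  | succ m ih =>
    intro t ht
    have hΓm := Gamma_pos_of_pos (by positivity : 0 < ((m : ℝ) + 1) * β)
    have hΓm' := Gamma_pos_of_pos (by positivity : 0 < ((m : ℝ) + 1 + 1) * β)
    have h_step := integral_singularKernel_mul_le (s := m * β) hα hα' (by nlinarith) ht.1 ht.2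
      (by positivity) (fun r hr => hnonneg (m + 1) (by omega) r ⟨hr.1.le, hr.2.trans ht.2⟩)
      (fun r hr => ih r ⟨hr.1.le, hr.2.trans ht.2⟩)
    refine (hrec (m + 1) (by omega) t ht).trans ((mul_le_mul_of_nonneg_left h_step hA).trans_eq ?_)
    rw [beta, show (m : ℝ) * β + β = (m + 1) * β by ring,
      show (m + 1 : ℝ) * β + β = (m + 1 + 1) * β by ring]
    push_cast
    field_simp
    ring

theorem stmt_4_general (α T A D : ℝ) (hα : 0 < α) (hα' : α < 1/2) (hT : 0 < T)
    (hA : 0 ≤ A) (hD : 0 ≤ D) (φ : ℕ → ℝ → ℝ)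
    (hnonneg : ∀ k : ℕ, 1 ≤ k → ∀ t ∈ Set.Icc (0:ℝ) T, 0 ≤ φ k t)
    (h1 : ∀ t ∈ Set.Icc (0:ℝ) T, φ 1 t ≤ D)
    (hrec : ∀ k : ℕ, 1 ≤ k → ∀ t ∈ Set.Icc (0:ℝ) T,
      φ (k+1) t ≤ A * ∫ r in (0:ℝ)..t, ((t - r) ^ (-(2*α)) + r ^ (-α)) * φ k r) :
    ∀ n : ℕ, 1 ≤ n → ∀ t ∈ Set.Icc (0:ℝ) T,
      φ n t ≤ D * (Gamma (1 - 2*α) / Gamma ((n : ℝ) * (1 - 2*α)))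
        * (A * (1 + T ^ α) * Gamma (1 - 2*α) * T ^ (1 - 2*α)) ^ (n - 1) := by
  intro n hn t ht
  obtain ⟨m, rfl⟩ : ∃ m, n = m + 1 := ⟨n - 1, by omega⟩
  have hβ : 0 < 1 - 2 * α := by linarith
  have h_t_le : t ^ ((m : ℝ) * (1 - 2 * α)) ≤ (T ^ (1 - 2 * α)) ^ m := by
    rw [← rpow_mul_natCast hT.le, mul_comm]
    exact rpow_le_rpow ht.1 ht.2 (by positivity)
  calc φ (m + 1) t
      ≤ D * (Gamma (1 - 2 * α) / Gamma ((m + 1) * (1 - 2 * α)))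
        * (A * (1 + T ^ α) * Gamma (1 - 2 * α)) ^ m * t ^ ((m : ℝ) * (1 - 2 * α)) :=
        singularGronwall_iterate_le_rpow hα hα' hT.le hA hD hnonneg h1 hrec m t ht
    _ ≤ D * (Gamma (1 - 2 * α) / Gamma ((m + 1) * (1 - 2 * α)))
        * (A * (1 + T ^ α) * Gamma (1 - 2 * α)) ^ m * (T ^ (1 - 2 * α)) ^ m := by
        have := Gamma_pos_of_pos hβ
        have := Gamma_pos_of_pos (by positivity : 0 < ((m : ℝ) + 1) * (1 - 2 * α))
        gcongr
    _ = _ := by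
        rw [Nat.add_sub_cancel, Nat.cast_add_one, mul_pow (A * (1 + T ^ α) * Gamma (1 - 2 * α))]
        ring

/-- Iterated Gronwall-type estimate with the singular kernel `(t-r)^{-2α} + r^{-α}`. -/
theorem stmt_4 (α T A D : ℝ) (hα : 0 < α) (hα' : α < 1/2) (hT : 0 < T)
    (hA : 0 ≤ A) (hD : 0 ≤ D) (φ : ℕ → ℝ → ℝ)
    (hmeas : ∀ k : ℕ, 1 ≤ k → Measurable (φ k))
    (hnonneg : ∀ k : ℕ, 1 ≤ k → ∀ t ∈ Set.Icc (0:ℝ) T, 0 ≤ φ k t)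
    (h1 : ∀ t ∈ Set.Icc (0:ℝ) T, φ 1 t ≤ D)
    (hrec : ∀ k : ℕ, 1 ≤ k → ∀ t ∈ Set.Icc (0:ℝ) T,
      φ (k+1) t ≤ A * ∫ r in (0:ℝ)..t, ((t - r) ^ (-(2*α)) + r ^ (-α)) * φ k r) :
    ∀ n : ℕ, 1 ≤ n → ∀ t ∈ Set.Icc (0:ℝ) T,
      φ n t ≤ D * (Gamma (1 - 2*α) / Gamma ((n : ℝ) * (1 - 2*α)))
        * (A * (1 + T ^ α) * Gamma (1 - 2*α) * T ^ (1 - 2*α)) ^ (n - 1) :=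
  stmt_4_general α T A D hα hα' hT hA hD φ hnonneg h1 hrec
end

section
/- Let $a,b>0$ and let $\lambda \geq 1$ be a real number. Then $B(\lambda a, \lambda b) \leq B(a,b)$, i.e. $\frac{\Gamma(\lambda a)\Gamma(\lambda b)}{\Gamma(\lambda(a+b))} \leq \frac{\Gamma(a)\Gamma(b)}{\Gamma(a+b)}$. -/
/-!
For `0 < x < 1` the map `c ↦ x ^ c` is antitone, so scaling both parameters by `l ≥ 1` can only
decrease the Beta integrand `x ^ (a - 1) * (1 - x) ^ (b - 1)` pointwise on `(0, 1)`.
-/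

open Real MeasureTheory Set

namespace ProbabilityTheory

lemma ofReal_betaIntegrand {a b x : ℝ} (hx : x ∈ Ioo 0 1) :
    (x : ℂ) ^ ((a : ℂ) - 1) * (1 - (x : ℂ)) ^ ((b : ℂ) - 1)
      = ((x ^ (a - 1) * (1 - x) ^ (b - 1) : ℝ) : ℂ) := by
  have h1x : 0 ≤ 1 - x := by linarith [hx.2]
  push_cast [Complex.ofReal_cpow hx.1.le, Complex.ofReal_cpow h1x]
  rfl

lemma integrableOn_betaIntegrand {a b : ℝ} (ha : 0 < a) (hb : 0 < b) :
    IntegrableOn (fun x : ℝ ↦ x ^ (a - 1) * (1 - x) ^ (b - 1)) (Ioo 0 1) := by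
  have hC := (Complex.betaIntegral_convergent (u := a) (v := b) (by simpa) (by simpa)).1
  refine IntegrableOn.congr_fun (hC.mono_set Ioo_subset_Ioc_self).re (fun x hx ↦ ?_)
    measurableSet_Ioo
  simp only [RCLike.re_to_complex, ofReal_betaIntegrand hx, Complex.ofReal_re]

lemma beta_eq_integral {a b : ℝ} (ha : 0 < a) (hb : 0 < b) :
    beta a b = ∫ x in Ioo 0 1, x ^ (a - 1) * (1 - x) ^ (b - 1) := by
  rw [beta_eq_betaIntegralReal a b ha hb, Complex.betaIntegral,
    intervalIntegral.integral_of_le zero_le_one, integral_Ioc_eq_integral_Ioo, setIntegral_congr_fun measurableSet_Ioo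
      (fun x hx ↦ ofReal_betaIntegrand (a := a) (b := b) hx), integral_complex_ofReal,
    Complex.ofReal_re]

lemma beta_mul_le_beta {a b l : ℝ} (ha : 0 < a) (hb : 0 < b) (hl : 1 ≤ l) :
    beta (l * a) (l * b) ≤ beta a b := by
  rw [beta_eq_integral (by positivity) (by positivity), beta_eq_integral ha hb]
  refine setIntegral_mono_on (integrableOn_betaIntegrand (by positivity) (by positivity))
    (integrableOn_betaIntegrand ha hb) measurableSet_Ioo fun x ⟨hx0, hx1⟩ ↦ ?_
  exact mul_le_mul (rpow_le_rpow_of_exponent_ge hx0 hx1.le (by nlinarith))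
    (rpow_le_rpow_of_exponent_ge (by linarith) (by linarith) (by nlinarith))
    (by positivity) (by positivity)

end ProbabilityTheory

open ProbabilityTheory in
/-- Monotonicity of the Beta function under simultaneous scaling:
for `a, b > 0` and `λ ≥ 1`, `B(λa, λb) ≤ B(a, b)`. -/
theorem stmt_6 (a b l : ℝ) (ha : 0 < a) (hb : 0 < b) (hl : 1 ≤ l) :
    Gamma (l * a) * Gamma (l * b) / Gamma (l * (a + b))
      ≤ Gamma a * Gamma b / Gamma (a + b) := by
  simpa only [beta, mul_add] using beta_mul_le_beta ha hb hl
end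

section
/- Let $a>\gamma>0$. Then for every real $x\geq 0$, $\sum_{k=1}^{\infty} \frac{\Gamma(k\gamma)}{\Gamma(ka)}\, x^{k-1} \;\leq\; B(\gamma, a-\gamma)\, \sum_{k=1}^{\infty} \frac{x^{k-1}}{\Gamma(k(a-\gamma))}$, and in particular the series on the left-hand side converges for every $x\geq 0$. -/
/-!
Writing `δ = a - γ`, we have `Γ(kγ)/Γ(ka) = B(kγ, kδ)/Γ(kδ)`, and `B(kγ, kδ) ≤ B(γ, δ)` for
`k ≥ 1` because the Euler integrand `t^(kγ-1) (1-t)^(kδ-1)` is pointwise at most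
`t^(γ-1) (1-t)^(δ-1)` on `(0, 1)`. This gives the termwise comparison. The comparison series
converges by the ratio test, since log-convexity of `Γ` forces `Γ(t)/Γ(t+δ) → 0`.
-/

open Real

open Filter Set Topology MeasureTheory ProbabilityTheory

namespace Complex

theorem betaIntegral_ofReal_s8 (u v : ℝ) :
    betaIntegral u v = ((∫ x in (0 : ℝ)..1, x ^ (u - 1) * (1 - x) ^ (v - 1) : ℝ) : ℂ) := by
  rw [betaIntegral, ← intervalIntegral.integral_ofReal]
  refine intervalIntegral.integral_congr fun x hx => ?_
  rw [uIcc_of_le zero_le_one] at hx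
  rw [ofReal_mul, ofReal_cpow hx.1, ofReal_cpow (sub_nonneg.2 hx.2)]
  push_cast
  ring

end Complex

namespace ProbabilityTheory

theorem beta_eq_integral_s8 {u v : ℝ} (hu : 0 < u) (hv : 0 < v) :
    beta u v = ∫ x in (0 : ℝ)..1, x ^ (u - 1) * (1 - x) ^ (v - 1) := by
  rw [beta_eq_betaIntegralReal u v hu hv, Complex.betaIntegral_ofReal_s8, Complex.ofReal_re]

theorem intervalIntegrable_betaIntegrand {u v : ℝ} (hu : 0 < u) (hv : 0 < v) :
    IntervalIntegrable (fun x : ℝ => x ^ (u - 1) * (1 - x) ^ (v - 1)) volume 0 1 := by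
  -- otherwise the integral would be the junk value `0`, while `beta u v > 0`
  by_contra h
  have := beta_pos hu hv
  rw [beta_eq_integral_s8 hu hv, intervalIntegral.integral_undef h] at this
  exact lt_irrefl 0 this

theorem beta_mul_le_beta_s8 {u v c : ℝ} (hu : 0 < u) (hv : 0 < v) (hc : 1 ≤ c) :
    beta (c * u) (c * v) ≤ beta u v := by
  rw [beta_eq_integral_s8 (by positivity) (by positivity), beta_eq_integral_s8 hu hv]
  refine intervalIntegral.integral_mono_on_of_le_Ioo zero_le_one
    (intervalIntegrable_betaIntegrand (by positivity) (by positivity))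
    (intervalIntegrable_betaIntegrand hu hv) fun x ⟨hx0, hx1⟩ => ?_
  gcongr ?_ * ?_
  · exact rpow_le_rpow_of_exponent_ge hx0 hx1.le (by nlinarith)
  · exact rpow_le_rpow_of_exponent_ge (by linarith) (by linarith) (by nlinarith)

end ProbabilityTheory

namespace Real

theorem Gamma_add_one_le_rpow_mul_Gamma_add {t ε : ℝ} (ht : 0 < t) (hε : 0 < ε) (hε1 : ε < 1) :
    Gamma (t + 1) ≤ (t + ε) ^ (1 - ε) * Gamma (t + ε) := by
  have htε : 0 < t + ε := by linarith
  have hΓ : 0 < Gamma (t + ε) := Gamma_pos_of_pos htε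
  calc Gamma (t + 1) = Gamma (ε * (t + ε) + (1 - ε) * (t + ε + 1)) := by ring_nf
    _ ≤ Gamma (t + ε) ^ ε * Gamma (t + ε + 1) ^ (1 - ε) :=
      Gamma_mul_add_mul_le_rpow_Gamma_mul_rpow_Gamma htε (by linarith) hε (by linarith) (by ring)
    _ = (t + ε) ^ (1 - ε) * Gamma (t + ε) := by
      rw [Gamma_add_one htε.ne', mul_rpow htε.le hΓ.le, mul_left_comm, ← rpow_add hΓ,
        add_sub_cancel, rpow_one]

theorem tendsto_Gamma_div_Gamma_add {δ : ℝ} (hδ : 0 < δ) :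
    Tendsto (fun t => Gamma t / Gamma (t + δ)) atTop (𝓝 0) := by
  set ε := min δ (1 / 2)
  have hε : 0 < ε := lt_min hδ one_half_pos
  have hε1 : ε < 1 := (min_le_right _ _).trans_lt one_half_lt_one
  have hbound : Tendsto (fun t => 2 * (t + ε) ^ (-ε)) atTop (𝓝 0) := by
    simpa using ((tendsto_rpow_neg_atTop hε).comp
      (tendsto_atTop_add_const_right _ ε tendsto_id)).const_mul 2
  refine tendsto_of_tendsto_of_tendsto_of_le_of_le' tendsto_const_nhds hbound ?_ ?_
  · filter_upwards [eventually_gt_atTop 0] with t ht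
    exact div_nonneg (Gamma_pos_of_pos ht).le (Gamma_pos_of_pos (by linarith)).le
  · filter_upwards [eventually_ge_atTop 2] with t ht
    have ht0 : 0 < t := by linarith
    have htε : 0 < t + ε := by linarith
    have hmono : Gamma (t + ε) ≤ Gamma (t + δ) :=
      Gamma_strictMonoOn_Ici.monotoneOn (by simp; linarith) (by simp; linarith)
        (by gcongr; exact min_le_left _ _)
    have hconv := Gamma_add_one_le_rpow_mul_Gamma_add ht0 hε hε1
    rw [Gamma_add_one ht0.ne'] at hconv
    calc Gamma t / Gamma (t + δ) ≤ Gamma t / Gamma (t + ε) := by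
          gcongr
      _ ≤ (t + ε) ^ (1 - ε) / t := by
          rw [div_le_div_iff₀ (Gamma_pos_of_pos htε) ht0]
          linarith
      _ = (t + ε) / t * (t + ε) ^ (-ε) := by
          rw [rpow_sub htε, rpow_one, rpow_neg htε.le]
          field_simp
      _ ≤ 2 * (t + ε) ^ (-ε) := by
          gcongr
          rw [div_le_iff₀ ht0]
          linarith [min_le_right δ (1 / 2)]

theorem summable_pow_div_Gamma_mul {δ : ℝ} (hδ : 0 < δ) (x : ℝ) :
    Summable fun k : ℕ => x ^ k / Gamma ((k + 1 : ℕ) * δ) := by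
  have hratio := ((tendsto_Gamma_div_Gamma_add hδ).comp <|
    ((tendsto_natCast_atTop_atTop (R := ℝ)).comp (tendsto_add_atTop_nat 1)).atTop_mul_const hδ
    ).const_mul |x|
  rw [mul_zero] at hratio
  refine summable_of_ratio_norm_eventually_le one_half_lt_one ?_
  filter_upwards [hratio.eventually_lt_const one_half_pos] with k hk
  simp only [Function.comp_apply] at hk
  set Γk := Gamma ((k + 1 : ℕ) * δ)
  have hΓk : 0 < Γk := Gamma_pos_of_pos (by positivity)
  have hnext : Gamma ((k + 1 + 1 : ℕ) * δ) = Gamma ((k + 1 : ℕ) * δ + δ) := by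
    push_cast; ring_nf
  have hΓnext : 0 < Gamma ((k + 1 : ℕ) * δ + δ) := Gamma_pos_of_pos (by positivity)
  rw [norm_div, norm_div, norm_pow, norm_pow, hnext, norm_of_nonneg hΓk.le,
    norm_of_nonneg hΓnext.le, Real.norm_eq_abs]
  calc |x| ^ (k + 1) / Gamma ((k + 1 : ℕ) * δ + δ)
      = |x| * (Γk / Gamma ((k + 1 : ℕ) * δ + δ)) * (|x| ^ k / Γk) := by
        field_simp; ring
    _ ≤ 1 / 2 * (|x| ^ k / Γk) := by gcongr

theorem Gamma_mul_div_Gamma_mul_add_le {u v c : ℝ} (hu : 0 < u) (hv : 0 < v) (hc : 1 ≤ c) :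
    Gamma (c * u) / Gamma (c * (u + v)) ≤ beta u v / Gamma (c * v) := by
  have hΓ : 0 < Gamma (c * v) := Gamma_pos_of_pos (by positivity)
  rw [le_div_iff₀ hΓ, div_mul_eq_mul_div, mul_add]
  exact beta_mul_le_beta_s8 hu hv hc

end Real

/-- Comparison of `∑_{k≥1} Γ(kγ)/Γ(ka) x^{k-1}` with the Mittag-Leffler-type series
`B(γ, a-γ) ∑_{k≥1} x^{k-1}/Γ(k(a-γ))`, for `a > γ > 0`. -/
theorem stmt_8 (a γ : ℝ) (hγ : 0 < γ) (hγa : γ < a) :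
    ∀ x : ℝ, 0 ≤ x →
      Summable (fun k : ℕ => Gamma ((k+1 : ℕ) * γ) / Gamma ((k+1 : ℕ) * a) * x ^ k) ∧
      ∑' k : ℕ, Gamma ((k+1 : ℕ) * γ) / Gamma ((k+1 : ℕ) * a) * x ^ k
        ≤ (Gamma γ * Gamma (a - γ) / Gamma a)
            * ∑' k : ℕ, x ^ k / Gamma ((k+1 : ℕ) * (a - γ)) := by
  intro x hx
  have hδ : 0 < a - γ := sub_pos.2 hγa
  have hB : beta γ (a - γ) = Gamma γ * Gamma (a - γ) / Gamma a := by
    rw [beta, add_sub_cancel]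
  have hterm (k : ℕ) : Gamma ((k+1 : ℕ) * γ) / Gamma ((k+1 : ℕ) * a) * x ^ k
      ≤ Gamma γ * Gamma (a - γ) / Gamma a * (x ^ k / Gamma ((k+1 : ℕ) * (a - γ))) := by
    have := Gamma_mul_div_Gamma_mul_add_le hγ hδ (c := (k + 1 : ℕ)) (by simp)
    rw [add_sub_cancel, hB] at this
    rw [← mul_comm_div]
    exact mul_le_mul_of_nonneg_right this (pow_nonneg hx k)
  have hdom := (summable_pow_div_Gamma_mul hδ x).mul_left (Gamma γ * Gamma (a - γ) / Gamma a)
  have ha : 0 < a := hγ.trans hγa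
  have hsum := hdom.of_nonneg_of_le (fun k => mul_nonneg (div_nonneg
    (Gamma_nonneg_of_nonneg (by positivity)) (Gamma_nonneg_of_nonneg (by positivity)))
    (pow_nonneg hx k)) hterm
  exact ⟨hsum, (hsum.tsum_le_tsum hterm hdom).trans_eq tsum_mul_left⟩
end

section
/- For a permutation $\sigma$ of $\{1,\dots,k\}$, let $e(\sigma)$ denote the number of descents of $\sigma$, i.e. the cardinality of $\{ j \in \{1,\dots,k-1\} : \sigma(j) > \sigma(j+1) \}$. Then there exists a constant $C>0$ such that for every integer $k\geq 1$, $\sum_{\sigma \in \mathcal{S}_k} \frac{1}{k^{2}\binom{k-1}{e(\sigma)}} \;\leq\; \frac{C}{2^{k}}\, k!\, \sqrt{k}$. -/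
/-!
Writing `d = e(σ)` and `k = m + 1`, the Beta integral gives
`1 / (k² C(m, d)) = k⁻¹ ∫₀¹ xᵈ (1 - x)^(m - d) dx`, so it suffices to bound
`∑_σ t^e(σ) (1 - t)^(m - e(σ))` by `k! / 2^m` uniformly in `t ∈ [0, 1]`. Reversing the values
of `σ` swaps descents and ascents, so we may take `t ≤ 1/2`. Writing each factor as
`t + (1 - 2t) [σ ascends at p]` and expanding, the bound follows from the count
`#{σ ascending at every p ∈ S} ≤ k! / 2^#S`, proved by adding the positions of `S` one at a time
from the left: composing with the transposition of the positions `a, a + 1` is an injection from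
the permutations ascending on `insert a S` to those ascending on `S` but descending at `a`.
-/

open Finset

lemma sum_prod_add_ite_mem_le {X ι : Type*} [Fintype X] [Fintype ι] [DecidableEq ι]
    (A : X → Finset ι) {N : ℝ} (hA : ∀ T : Finset ι, #{x | T ⊆ A x} * (2 : ℝ) ^ #T ≤ N)
    {u c : ℝ} (hu : 0 ≤ u) (hc : 0 ≤ c) :
    ∑ x, ∏ i, (u + if i ∈ A x then c else 0) ≤ N * (c / 2 + u) ^ Fintype.card ι := by
  have hexpand : ∀ x, ∏ i, (u + if i ∈ A x then c else 0)
      = ∑ T : Finset ι, (if T ⊆ A x then c ^ #T else 0) * u ^ (Fintype.card ι - #T) := by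
    intro x
    simp [add_comm u, Fintype.prod_add, prod_ite_zero, card_compl, subset_iff]
  calc ∑ x, ∏ i, (u + if i ∈ A x then c else 0)
      = ∑ T : Finset ι, #{x | T ⊆ A x} * c ^ #T * u ^ (Fintype.card ι - #T) := by
        simp_rw [hexpand, sum_comm (γ := X), ← sum_mul, ← sum_filter, sum_const, nsmul_eq_mul]
    _ ≤ ∑ T : Finset ι, N * ((c / 2) ^ #T * u ^ (Fintype.card ι - #T)) := by
        refine sum_le_sum fun T _ => ?_
        calc #{x | T ⊆ A x} * c ^ #T * u ^ (Fintype.card ι - #T)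
            = #{x | T ⊆ A x} * 2 ^ #T * ((c / 2) ^ #T * u ^ (Fintype.card ι - #T)) := by
              rw [div_pow]; field_simp
          _ ≤ _ := by gcongr; exact hA T
    _ = N * (c / 2 + u) ^ Fintype.card ι := by
        rw [← mul_sum, Fintype.sum_pow_mul_eq_add_pow]

lemma integral_pow_mul_one_sub_pow_succ (a b : ℕ) :
    (a + 1) * ∫ x in (0 : ℝ)..1, x ^ a * (1 - x) ^ (b + 1)
      = (b + 1) * ∫ x in (0 : ℝ)..1, x ^ (a + 1) * (1 - x) ^ b := by
  have hu (x : ℝ) : HasDerivAt (fun x => (1 - x) ^ (b + 1)) (-((b + 1) * (1 - x) ^ b)) x := by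
    simpa using ((hasDerivAt_id x).const_sub 1).fun_pow (b + 1)
  have hv (x : ℝ) : HasDerivAt (fun x => x ^ (a + 1)) ((a + 1) * x ^ a) x := by
    simpa using hasDerivAt_pow (a + 1) x
  have hibp := intervalIntegral.integral_mul_deriv_eq_deriv_mul (a := 0) (b := 1)
    (fun x _ => hu x) (fun x _ => hv x) (by apply Continuous.intervalIntegrable; fun_prop)
    (by apply Continuous.intervalIntegrable; fun_prop)
  simp only [sub_self, zero_pow (Nat.succ_ne_zero _), zero_mul, mul_zero, sub_zero, neg_mul,
    intervalIntegral.integral_neg, sub_neg_eq_add, zero_add] at hibp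
  rw [← intervalIntegral.integral_const_mul, ← intervalIntegral.integral_const_mul]
  convert hibp using 2 <;> ext x <;> ring

lemma integral_pow_mul_one_sub_pow (a b : ℕ) :
    ∫ x in (0 : ℝ)..1, x ^ a * (1 - x) ^ b = 1 / ((a + b + 1) * (a + b).choose a) := by
  induction b generalizing a with
  | zero => simp [integral_pow]
  | succ b ih =>
    have hC : ((a + b + 1).choose (a + 1) : ℝ) * (a + 1) = (a + b + 1).choose a * (b + 1) := by
      exact_mod_cast (Nat.choose_succ_right_eq (a + b + 1) a).trans (by congr 1; omega)
    have h := integral_pow_mul_one_sub_pow_succ a b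
    rw [ih, show a + 1 + b = a + b + 1 by ring] at h
    have : 0 < (a + b + 1).choose a := Nat.choose_pos (by omega)
    have : 0 < (a + b + 1).choose (a + 1) := Nat.choose_pos (by omega)
    rw [show a + (b + 1) = a + b + 1 by ring]
    field_simp at h ⊢
    push_cast at h ⊢
    refine mul_right_cancel₀ (b := (b : ℝ) + 1) (by positivity) ?_
    linear_combination h - (∫ x in (0 : ℝ)..1, x ^ a * (1 - x) ^ (b + 1)) * (a + b + 2) * hC

namespace Equiv.Perm

variable {n : ℕ}

def descents (σ : Perm (Fin (n + 1))) : Finset (Fin n) :=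
  univ.filter fun p => σ p.succ < σ p.castSucc

lemma card_descents_le (σ : Perm (Fin (n + 1))) : #(descents σ) ≤ n :=
  (card_le_univ _).trans_eq (Fintype.card_fin n)

lemma notMem_descents_iff {σ : Perm (Fin (n + 1))} {p : Fin n} :
    p ∉ descents σ ↔ σ p.castSucc < σ p.succ := by
  simp only [descents, mem_filter, mem_univ, true_and, not_lt]
  exact (σ.injective.ne (Fin.castSucc_lt_succ (i := p)).ne).le_iff_lt

lemma descents_revPerm_mul (σ : Perm (Fin (n + 1))) :
    descents (Fin.revPerm * σ) = (descents σ)ᶜ := by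
  ext p
  rw [mem_compl, notMem_descents_iff]
  simp [descents, Fin.rev_lt_rev]

def ascendingOn (S : Finset (Fin n)) : Finset (Perm (Fin (n + 1))) :=
  univ.filter fun σ => ∀ p ∈ S, σ p.castSucc < σ p.succ

lemma two_mul_card_ascendingOn_insert_le {a : Fin n} {S : Finset (Fin n)}
    (ha : ∀ p ∈ S, a < p) :
    2 * #(ascendingOn (insert a S)) ≤ #(ascendingOn S) := by
  set τ := swap a.castSucc a.succ
  have hsub : ascendingOn (insert a S) ⊆ ascendingOn S := fun σ hσ => by
    simp only [ascendingOn, mem_filter, mem_univ, true_and, forall_mem_insert] at hσ ⊢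
    exact hσ.2
  -- Swapping the entries at positions `a, a+1` keeps every ascent of `S`: the only one affected is
  -- at `a+1`, and it survives since `σ a < σ (a+1) < σ (a+2)`.
  have hswap : ∀ σ ∈ ascendingOn (insert a S), σ * τ ∈ ascendingOn S ∧
      (σ * τ) a.succ < (σ * τ) a.castSucc := by
    intro σ hσ
    simp only [ascendingOn, mem_filter, mem_univ, true_and, forall_mem_insert] at hσ ⊢
    obtain ⟨hσa, hσS⟩ := hσ
    refine ⟨fun p hp => ?_, by simpa [τ] using hσa⟩
    have hap := ha p hp
    rw [Fin.lt_def] at hap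
    have hsucc : τ p.succ = p.succ := swap_apply_of_ne_of_ne
      (by simp [Fin.ext_iff]; omega) (by simp [Fin.ext_iff]; omega)
    rcases eq_or_ne p.castSucc a.succ with hpa | hpa
    · have : τ p.castSucc = a.castSucc := by rw [hpa, swap_apply_right]
      simp only [Perm.mul_apply, this, hsucc]
      exact hσa.trans (hpa ▸ hσS p hp)
    · have hcast : τ p.castSucc = p.castSucc := swap_apply_of_ne_of_ne
        (by simp [Fin.ext_iff]; omega) hpa
      simpa only [Perm.mul_apply, hcast, hsucc] using hσS p hp
  have hdisj :
      _root_.Disjoint (ascendingOn (insert a S)) ((ascendingOn (insert a S)).image (· * τ)) := by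
    rw [disjoint_left]
    intro σ hσ hσ'
    obtain ⟨ρ, hρ, rfl⟩ := mem_image.1 hσ'
    simp only [ascendingOn, mem_filter, mem_univ, true_and, forall_mem_insert] at hσ
    exact (hswap ρ hρ).2.not_gt hσ.1
  calc 2 * #(ascendingOn (insert a S))
      = #(ascendingOn (insert a S) ∪ (ascendingOn (insert a S)).image (· * τ)) := by
        rw [card_union_of_disjoint hdisj, card_image_of_injective _ (mul_left_injective τ)]
        ring
    _ ≤ #(ascendingOn S) := card_le_card <| union_subset hsub fun σ hσ => by
        obtain ⟨ρ, hρ, rfl⟩ := mem_image.1 hσ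
        exact (hswap ρ hρ).1

lemma card_ascendingOn_mul_two_pow_le (S : Finset (Fin n)) :
    #(ascendingOn S) * 2 ^ #S ≤ (n + 1).factorial := by
  induction S using Finset.induction_on_min with
  | empty => simpa [ascendingOn] using (Fintype.card_perm (α := Fin (n + 1))).le
  | insert a S ha ih =>
    have haS : a ∉ S := fun h => lt_irrefl a (ha a h)
    calc #(ascendingOn (insert a S)) * 2 ^ #(insert a S)
        = 2 * #(ascendingOn (insert a S)) * 2 ^ #S := by rw [card_insert_of_notMem haS]; ring
      _ ≤ #(ascendingOn S) * 2 ^ #S := by gcongr; exact two_mul_card_ascendingOn_insert_le ha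
      _ ≤ (n + 1).factorial := ih

lemma pow_card_descents_mul_eq_prod (σ : Perm (Fin (n + 1))) (t : ℝ) :
    t ^ #(descents σ) * (1 - t) ^ (n - #(descents σ))
      = ∏ p, (t + if p ∈ (descents σ)ᶜ then 1 - 2 * t else 0) := by
  simp only [add_ite, add_zero, prod_ite, prod_const]
  simp [filter_not, card_univ_sdiff]
  ring

lemma sum_pow_card_descents_le_of_le_half {t : ℝ} (h0 : 0 ≤ t) (h : t ≤ 1 / 2) :
    ∑ σ : Perm (Fin (n + 1)), t ^ #(descents σ) * (1 - t) ^ (n - #(descents σ))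
      ≤ (n + 1).factorial / 2 ^ n := by
  have hA (T : Finset (Fin n)) :
      #{σ : Perm (Fin (n + 1)) | T ⊆ (descents σ)ᶜ} * (2 : ℝ) ^ #T ≤ (n + 1).factorial := by
    have : univ.filter (fun σ : Perm (Fin (n + 1)) => T ⊆ (descents σ)ᶜ) = ascendingOn T := by
      ext σ
      simp [ascendingOn, subset_iff, ← notMem_descents_iff]
    rw [this]
    exact_mod_cast card_ascendingOn_mul_two_pow_le T
  calc _ = ∑ σ : Perm (Fin (n + 1)), ∏ p, (t + if p ∈ (descents σ)ᶜ then 1 - 2 * t else 0) := by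
        simp only [pow_card_descents_mul_eq_prod]
    _ ≤ (n + 1).factorial * ((1 - 2 * t) / 2 + t) ^ n := by
        simpa using sum_prod_add_ite_mem_le _ hA h0 (by linarith)
    _ = (n + 1).factorial / 2 ^ n := by
        rw [show (1 - 2 * t) / 2 + t = 1 / 2 by ring, div_pow, one_pow, mul_one_div]

lemma sum_pow_card_descents_symm (t : ℝ) :
    ∑ σ : Perm (Fin (n + 1)), t ^ #(descents σ) * (1 - t) ^ (n - #(descents σ))
      = ∑ σ : Perm (Fin (n + 1)), (1 - t) ^ #(descents σ) * t ^ (n - #(descents σ)) := by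
  refine Fintype.sum_equiv (Equiv.mulLeft Fin.revPerm) _ _ fun σ => ?_
  rw [coe_mulLeft, descents_revPerm_mul, card_compl, Fintype.card_fin,
    Nat.sub_sub_self (card_descents_le σ), mul_comm]

lemma sum_pow_card_descents_le {t : ℝ} (h0 : 0 ≤ t) (h1 : t ≤ 1) :
    ∑ σ : Perm (Fin (n + 1)), t ^ #(descents σ) * (1 - t) ^ (n - #(descents σ))
      ≤ (n + 1).factorial / 2 ^ n := by
  rcases le_total t (1 / 2) with h | h
  · exact sum_pow_card_descents_le_of_le_half h0 h
  · rw [sum_pow_card_descents_symm]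
    simpa using sum_pow_card_descents_le_of_le_half (t := 1 - t) (by linarith) (by linarith)

lemma sum_integral_pow_card_descents_le :
    ∑ σ : Perm (Fin (n + 1)), ∫ x in (0 : ℝ)..1, x ^ #(descents σ) * (1 - x) ^ (n - #(descents σ))
      ≤ (n + 1).factorial / 2 ^ n := by
  rw [← intervalIntegral.integral_finsetSum fun σ _ => by
    apply Continuous.intervalIntegrable; fun_prop]
  calc _ ≤ ∫ _ in (0 : ℝ)..1, ((n + 1).factorial / 2 ^ n : ℝ) :=
        intervalIntegral.integral_mono_on zero_le_one
          (by apply Continuous.intervalIntegrable; fun_prop) intervalIntegrable_const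
          fun x hx => sum_pow_card_descents_le hx.1 hx.2
    _ = (n + 1).factorial / 2 ^ n := by simp

lemma integral_pow_card_descents (σ : Perm (Fin (n + 1))) :
    ∫ x in (0 : ℝ)..1, x ^ #(descents σ) * (1 - x) ^ (n - #(descents σ))
      = 1 / ((n + 1) * n.choose #(descents σ)) := by
  rw [integral_pow_mul_one_sub_pow, Nat.add_sub_cancel' (card_descents_le σ),
    Nat.cast_sub (card_descents_le σ)]
  ring

end Equiv.Perm

open Equiv.Perm in
/-- Bound on the sum of the absolute values of the coefficients of the degree-`k` term of the
Chen–Strichartz expansion: `∑_{σ ∈ S_k} 1/(k² C(k-1, e(σ))) ≤ C 2^{-k} k! √k`,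
where `e(σ)` is the number of descents of `σ` (here `k = m+1 ≥ 1`). -/
theorem stmt_12 :
    ∃ C : ℝ, 0 < C ∧ ∀ m : ℕ,
      ∑ σ : Equiv.Perm (Fin (m+1)),
          (1 : ℝ) / ((m+1 : ℝ)^2 *
            (Nat.choose m (univ.filter (fun j : Fin m => σ j.succ < σ j.castSucc)).card : ℝ))
        ≤ C / 2 ^ (m+1) * ((m+1).factorial : ℝ) * Real.sqrt (m+1) := by
  refine ⟨2, two_pos, fun m => ?_⟩
  have hm : (1 : ℝ) ≤ m + 1 := by linarith [m.cast_nonneg (α := ℝ)]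
  calc _ = (m + 1 : ℝ)⁻¹ * ∑ σ : Equiv.Perm (Fin (m + 1)),
          ∫ x in (0 : ℝ)..1, x ^ #(descents σ) * (1 - x) ^ (m - #(descents σ)) := by
        rw [mul_sum]
        refine sum_congr rfl fun σ _ => ?_
        rw [integral_pow_card_descents]
        field_simp
        rfl
    _ ≤ (m + 1 : ℝ)⁻¹ * ((m + 1).factorial / 2 ^ m) := by
        gcongr; exact sum_integral_pow_card_descents_le
    _ ≤ (m + 1).factorial / 2 ^ m :=
        mul_le_of_le_one_left (by positivity) (inv_le_one_of_one_le₀ hm)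
    _ ≤ (m + 1).factorial / 2 ^ m * √(m + 1) :=
        le_mul_of_one_le_right (by positivity) (Real.one_le_sqrt.2 hm)
    _ = 2 / 2 ^ (m + 1) * (m + 1).factorial * √(m + 1) := by rw [pow_succ]; ring
end
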